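/- If a rotationally asymmetric configuration of distinct points on a circle has two confused leaders, then the first clockwise neighbors of the two confused leaders are not antipodal to each other. -/

import Mathlib

open Real

/-- Normalize a real number into `[0, 2π)` (representing an angle on the circle). -/
noncomputable def norm2pi (x : ℝ) : ℝ := (2 * π) * Int.fract (x / (2 * π))

/-- Clockwise angular distance from `a` to `b`, in `[0, 2π)`. -/
noncomputable def cwAngle (a b : ℝ) : ℝ := norm2pi (b - a)

/-- A configuration: a finite set of angles, all lying in `[0, 2π)`. -/
def OnCircle (s : Finset ℝ) : Prop := ∀ x ∈ s, 0 ≤ x ∧ x < 2 * π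

/-- Rotation of a configuration by angle `θ`. -/
noncomputable def rotConf (s : Finset ℝ) (θ : ℝ) : Finset ℝ :=
  s.image (fun x => norm2pi (x + θ))

/-- Rotational asymmetry: no nontrivial rotation preserves the configuration. -/
def RotAsym (s : Finset ℝ) : Prop := ∀ θ ∈ Set.Ioo 0 (2 * π), rotConf s θ ≠ s

/-- The clockwise gap (angle) sequence of the point `r` in configuration `s`:
consecutive clockwise angular gaps starting at `r`. -/
noncomputable def angleSeq (s : Finset ℝ) (r : ℝ) : List ℝ :=
  let l := ((s.erase r).image (fun x => cwAngle r x)).sort (· ≤ ·)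
  List.zipWith (fun u v => u - v) (l ++ [2 * π]) (0 :: l)

/-- Strict lexicographic order on lists of reals. -/
def ListLexLt (l₁ l₂ : List ℝ) : Prop := List.Lex (· < ·) l₁ l₂

/-- `r` is the true leader of `s`: its angle sequence is lexicographically strictly
smaller than that of every other point. -/
def IsTrueLeader (s : Finset ℝ) (r : ℝ) : Prop :=
  r ∈ s ∧ ∀ x ∈ s, x ≠ r → ListLexLt (angleSeq s r) (angleSeq s x)

/-- The antipodal position of a point `r`. -/
noncomputable def antip (r : ℝ) : ℝ := norm2pi (r + π)

/-- The configuration as seen from `r` assuming its antipodal position is empty. -/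
noncomputable def confC0 (s : Finset ℝ) (r : ℝ) : Finset ℝ := s.erase (antip r)

/-- The configuration as seen from `r` assuming its antipodal position is occupied. -/
noncomputable def confC1 (s : Finset ℝ) (r : ℝ) : Finset ℝ := insert (antip r) s

/-- A confused leader: both possibilities `C₀(r)` and `C₁(r)` are rotationally
asymmetric, and `r` is the true leader in exactly one of them. -/
def ConfusedLeader (s : Finset ℝ) (r : ℝ) : Prop :=
  r ∈ s ∧ RotAsym (confC0 s r) ∧ RotAsym (confC1 s r) ∧
    Xor' (IsTrueLeader (confC0 s r) r) (IsTrueLeader (confC1 s r) r)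

/-- A sure leader: `r` is the true leader in every possible (rotationally
asymmetric) configuration among `C₀(r)`, `C₁(r)`. -/
def SureLeader (s : Finset ℝ) (r : ℝ) : Prop :=
  r ∈ s ∧ (RotAsym (confC0 s r) → IsTrueLeader (confC0 s r) r) ∧
    (RotAsym (confC1 s r) → IsTrueLeader (confC1 s r) r)

/-- An expected leader is a sure leader or a confused leader. -/
def ExpectedLeader (s : Finset ℝ) (r : ℝ) : Prop := SureLeader s r ∨ ConfusedLeader s r

/-- `r'` is the first clockwise neighbor of `r` in `s`. -/
def IsCwNeighbor (s : Finset ℝ) (r r' : ℝ) : Prop :=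
  r' ∈ s ∧ r' ≠ r ∧ ∀ x ∈ s, x ≠ r → cwAngle r r' ≤ cwAngle r x

/-!
Removing the antipode of a true leader keeps it the true leader. Comparing gap sequences
lexicographically amounts to asking which of the two sets of clockwise angles owns the least
element of their symmetric difference; removal could only spoil this if that element and the
angle to the removed antipode both came after `π`, and a shift argument rules this out. Hence a
confused leader `r` leads `C₀(r)` but not `C₁(r)`. Comparing with the true leader `L` of `s`, every
other confused leader `r` has `antip r ∈ s` and `π ≤ cwAngle L r`, while `antip L ∉ s` if `L` is
confused. So the first neighbours of the confused leaders other than `L` lie in the half-open arc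
from `antip L` to `L`, which contains no antipodal pair; and if `L` itself is confused, its first
gap would be larger than that of the other confused leader, against the leadership of `L`.
-/

open Set AddCommGroup

lemma norm2pi_eq_toIcoMod (x : ℝ) : norm2pi x = toIcoMod two_pi_pos 0 x := by
  rw [norm2pi, toIcoMod_eq_fract_mul, mul_comm]

lemma norm2pi_mem_Ico (x : ℝ) : norm2pi x ∈ Ico 0 (2 * π) := by
  simpa [norm2pi_eq_toIcoMod] using toIcoMod_mem_Ico two_pi_pos 0 x

lemma norm2pi_eq_iff {x y : ℝ} (hy : y ∈ Ico 0 (2 * π)) :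
    norm2pi x = y ↔ x ≡ y [PMOD 2 * π] := by
  rw [norm2pi_eq_toIcoMod, toIcoMod_eq_iff, modEq_comm, modEq_iff_eq_add_zsmul, zero_add]
  exact and_iff_right hy

lemma norm2pi_modEq (x : ℝ) : norm2pi x ≡ x [PMOD 2 * π] := by
  rw [norm2pi_eq_toIcoMod, ← toIcoMod_inj two_pi_pos (c := 0), toIcoMod_toIcoMod]

lemma norm2pi_eq_norm2pi_iff {x y : ℝ} : norm2pi x = norm2pi y ↔ x ≡ y [PMOD 2 * π] := by
  simp only [norm2pi_eq_toIcoMod, toIcoMod_inj]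

lemma norm2pi_eq_self {x : ℝ} (hx : x ∈ Ico 0 (2 * π)) : norm2pi x = x :=
  (norm2pi_eq_iff hx).mpr modEq_rfl

lemma add_two_pi_modEq (x : ℝ) : x + 2 * π ≡ x [PMOD 2 * π] :=
  add_modEq_left.mpr self_modEq_zero

lemma norm2pi_add_pi_of_lt {x : ℝ} (h0 : 0 ≤ x) (h : x < π) : norm2pi (x + π) = x + π :=
  norm2pi_eq_self ⟨by linarith [pi_pos], by linarith⟩

lemma norm2pi_add_pi_of_le {x : ℝ} (h : π ≤ x) (h2π : x < 2 * π) : norm2pi (x + π) = x - π := by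
  rw [norm2pi_eq_iff ⟨by linarith, by linarith [pi_pos]⟩]
  calc x + π = x - π + 2 * π := by ring
    _ ≡ x - π [PMOD 2 * π] := add_two_pi_modEq _

lemma norm2pi_two_pi : norm2pi (2 * π) = 0 :=
  (norm2pi_eq_iff ⟨le_rfl, two_pi_pos⟩).mpr self_modEq_zero

lemma eq_of_modEq_two_pi {x y : ℝ} (hx : x ∈ Ico 0 (2 * π)) (hy : y ∈ Ico 0 (2 * π))
    (h : x ≡ y [PMOD 2 * π]) : x = y := by
  rw [← norm2pi_eq_self hx, norm2pi_eq_iff hy]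
  exact h

lemma cwAngle_mem_Ico (a b : ℝ) : cwAngle a b ∈ Ico 0 (2 * π) := norm2pi_mem_Ico _

lemma cwAngle_modEq (a b : ℝ) : cwAngle a b ≡ b - a [PMOD 2 * π] := norm2pi_modEq _

lemma cwAngle_eq_iff {a b t : ℝ} (ht : t ∈ Ico 0 (2 * π)) :
    cwAngle a b = t ↔ b - a ≡ t [PMOD 2 * π] := norm2pi_eq_iff ht

lemma cwAngle_self (a : ℝ) : cwAngle a a = 0 := by
  simp [cwAngle, norm2pi]

lemma cwAngle_eq_zero_iff {a b : ℝ} (ha : a ∈ Ico 0 (2 * π)) (hb : b ∈ Ico 0 (2 * π)) :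
    cwAngle a b = 0 ↔ a = b := by
  rw [cwAngle_eq_iff ⟨le_rfl, two_pi_pos⟩, sub_modEq_zero]
  exact ⟨fun h => (eq_of_modEq_two_pi hb ha h).symm, fun h => h ▸ modEq_rfl⟩

lemma cwAngle_pos {a b : ℝ} (ha : a ∈ Ico 0 (2 * π)) (hb : b ∈ Ico 0 (2 * π)) (hab : a ≠ b) :
    0 < cwAngle a b :=
  (cwAngle_mem_Ico a b).1.lt_of_ne (Ne.symm <| (cwAngle_eq_zero_iff ha hb).not.mpr hab)

lemma cwAngle_add_cwAngle {a b : ℝ} (ha : a ∈ Ico 0 (2 * π)) (hb : b ∈ Ico 0 (2 * π))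
    (hab : a ≠ b) : cwAngle a b + cwAngle b a = 2 * π := by
  have hpos := cwAngle_pos ha hb hab
  have hlt := (cwAngle_mem_Ico a b).2
  suffices cwAngle b a = 2 * π - cwAngle a b by linarith
  rw [cwAngle_eq_iff ⟨by linarith, by linarith⟩]
  calc a - b = -(b - a) := by ring
    _ ≡ -cwAngle a b [PMOD 2 * π] := (cwAngle_modEq a b).symm.neg
    _ ≡ -cwAngle a b + 2 * π [PMOD 2 * π] := (add_two_pi_modEq _).symm
    _ = 2 * π - cwAngle a b := by ring

lemma cwAngle_trans (a b c : ℝ) : cwAngle a c = norm2pi (cwAngle a b + cwAngle b c) := by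
  rw [cwAngle, norm2pi_eq_norm2pi_iff]
  calc c - a = (b - a) + (c - b) := by ring
    _ ≡ cwAngle a b + cwAngle b c [PMOD 2 * π] :=
      ((cwAngle_modEq a b).add (cwAngle_modEq b c)).symm

lemma cwAngle_trans_of_lt {a b c : ℝ} (h : cwAngle a b + cwAngle b c < 2 * π) :
    cwAngle a c = cwAngle a b + cwAngle b c := by
  rw [cwAngle_trans a b c]
  exact norm2pi_eq_self ⟨add_nonneg (cwAngle_mem_Ico a b).1 (cwAngle_mem_Ico b c).1, h⟩

noncomputable def cwPoint (p t : ℝ) : ℝ := norm2pi (p + t)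

lemma cwPoint_mem_Ico (p t : ℝ) : cwPoint p t ∈ Ico 0 (2 * π) := norm2pi_mem_Ico _

lemma cwAngle_cwPoint (p : ℝ) {t : ℝ} (ht : t ∈ Ico 0 (2 * π)) :
    cwAngle p (cwPoint p t) = t := by
  rw [cwAngle_eq_iff ht]
  calc cwPoint p t - p ≡ p + t - p [PMOD 2 * π] := (norm2pi_modEq _).sub_right p
    _ = t := by ring

lemma cwPoint_cwAngle (p : ℝ) {x : ℝ} (hx : x ∈ Ico 0 (2 * π)) : cwPoint p (cwAngle p x) = x := by
  rw [cwPoint, norm2pi_eq_iff hx]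
  calc p + cwAngle p x ≡ p + (x - p) [PMOD 2 * π] := (cwAngle_modEq p x).add_left p
    _ = x := by ring

lemma cwPoint_cwPoint (p t u : ℝ) : cwPoint (cwPoint p t) u = cwPoint p (t + u) := by
  rw [cwPoint, cwPoint, cwPoint, norm2pi_eq_norm2pi_iff, ← add_assoc]
  exact (norm2pi_modEq _).add_right u

lemma pi_mem_Ico : π ∈ Ico 0 (2 * π) := ⟨pi_pos.le, by linarith [pi_pos]⟩

lemma antip_eq_cwPoint (r : ℝ) : antip r = cwPoint r π := rfl

lemma antip_mem_Ico (r : ℝ) : antip r ∈ Ico 0 (2 * π) := norm2pi_mem_Ico _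

lemma cwAngle_antip (r : ℝ) : cwAngle r (antip r) = π := cwAngle_cwPoint r pi_mem_Ico

lemma cwAngle_eq_pi_iff {r x : ℝ} (hx : x ∈ Ico 0 (2 * π)) : cwAngle r x = π ↔ x = antip r :=
  ⟨fun h => by rw [← cwPoint_cwAngle r hx, h, antip_eq_cwPoint], fun h => h ▸ cwAngle_antip r⟩

lemma antip_ne_self (r : ℝ) : antip r ≠ r := by
  intro h
  have := cwAngle_antip r
  rw [h, cwAngle_self] at this
  exact pi_ne_zero this.symm

lemma antip_antip {r : ℝ} (hr : r ∈ Ico 0 (2 * π)) : antip (antip r) = r := by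
  rw [antip_eq_cwPoint, antip_eq_cwPoint, cwPoint_cwPoint, cwPoint, ← two_mul, norm2pi_eq_iff hr]
  exact add_two_pi_modEq r

lemma antip_modEq (r : ℝ) : antip r ≡ r + π [PMOD 2 * π] := norm2pi_modEq _

lemma cwAngle_antip_left (a b : ℝ) : cwAngle (antip a) b = norm2pi (cwAngle a b + π) := by
  rw [cwAngle, norm2pi_eq_norm2pi_iff]
  calc b - antip a ≡ b - (a + π) [PMOD 2 * π] := (antip_modEq a).sub_left b
    _ = b - a - π := by ring
    _ ≡ b - a - π + 2 * π [PMOD 2 * π] := (add_two_pi_modEq _).symm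
    _ = b - a + π := by ring
    _ ≡ cwAngle a b + π [PMOD 2 * π] := ((cwAngle_modEq a b).add_right π).symm

lemma cwAngle_antip_right (a b : ℝ) : cwAngle a (antip b) = norm2pi (cwAngle a b + π) := by
  rw [cwAngle, norm2pi_eq_norm2pi_iff]
  calc antip b - a ≡ b + π - a [PMOD 2 * π] := (antip_modEq b).sub_right a
    _ = b - a + π := by ring
    _ ≡ cwAngle a b + π [PMOD 2 * π] := ((cwAngle_modEq a b).add_right π).symm

section Beats

variable {α : Type*} [LinearOrder α]

def BeatsAt (D₁ D₂ : Finset α) (m : α) : Prop :=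
  m ∈ D₁ ∧ m ∉ D₂ ∧ ∀ x < m, (x ∈ D₁ ↔ x ∈ D₂)

def Beats (D₁ D₂ : Finset α) : Prop := ∃ m, BeatsAt D₁ D₂ m

lemma not_beats_empty (D : Finset α) : ¬ Beats ∅ D := by
  rintro ⟨m, hm, -⟩
  simp at hm

lemma Beats.asymm {D₁ D₂ : Finset α} : Beats D₁ D₂ → ¬ Beats D₂ D₁ := by
  rintro ⟨m, hm₁, hm₂, hm⟩ ⟨m', hm₂', hm₁', hm'⟩
  rcases lt_trichotomy m m' with h | rfl | h
  · exact hm₂ ((hm' m h).mpr hm₁)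
  · exact hm₂ hm₂'
  · exact hm₁' ((hm m' h).mpr hm₂')

lemma beats_or_beats_of_ne {D₁ D₂ : Finset α} (h : D₁ ≠ D₂) : Beats D₁ D₂ ∨ Beats D₂ D₁ := by
  classical
  have hne : (symmDiff D₁ D₂).Nonempty := by
    rwa [Finset.nonempty_iff_ne_empty, Ne, ← Finset.bot_eq_empty, symmDiff_eq_bot]
  set m := (symmDiff D₁ D₂).min' hne
  have hagree : ∀ x < m, (x ∈ D₁ ↔ x ∈ D₂) := fun x hx => by
    by_contra hx'
    exact not_le.mpr hx ((symmDiff D₁ D₂).min'_le x (Finset.mem_symmDiff.mpr (by tauto)))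
  rcases Finset.mem_symmDiff.mp ((symmDiff D₁ D₂).min'_mem hne) with ⟨h₁, h₂⟩ | ⟨h₂, h₁⟩
  · exact .inl ⟨m, h₁, h₂, hagree⟩
  · exact .inr ⟨m, h₂, h₁, fun x hx => (hagree x hx).symm⟩

lemma BeatsAt.exists_le {D₁ D₂ : Finset α} {m x : α} (h : BeatsAt D₁ D₂ m) (hx : x ∈ D₂) :
    ∃ y ∈ D₁, y ≤ x := by
  rcases lt_or_ge x m with hxm | hmx
  · exact ⟨x, (h.2.2 x hxm).mpr hx, le_rfl⟩
  · exact ⟨m, h.1, hmx⟩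

lemma BeatsAt.beats_erase_erase {D₁ D₂ : Finset α} {m a b : α} (h : BeatsAt D₁ D₂ m)
    (hb : b ∈ D₂) (hab : min m b < a) : Beats (D₁.erase a) (D₂.erase b) := by
  obtain ⟨hm₁, hm₂, hm⟩ := h
  rcases lt_or_gt_of_ne (show m ≠ b from fun h => hm₂ (h ▸ hb)) with hmb | hbm
  · have hma : m < a := by simpa [min_eq_left hmb.le] using hab
    refine ⟨m, Finset.mem_erase.mpr ⟨hma.ne, hm₁⟩, fun h => hm₂ (Finset.mem_of_mem_erase h),
      fun x hx => ?_⟩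
    simp only [Finset.mem_erase, (hx.trans hma).ne, (hx.trans hmb).ne, ne_eq, not_false_eq_true,
      true_and, hm x hx]
  · have hba : b < a := by simpa [min_eq_right hbm.le] using hab
    refine ⟨b, Finset.mem_erase.mpr ⟨hba.ne, (hm b hbm).mpr hb⟩, by simp, fun x hx => ?_⟩
    simp only [Finset.mem_erase, (hx.trans hba).ne, hx.ne, ne_eq, not_false_eq_true, true_and,
      hm x (hx.trans hbm)]

lemma beats_insert_of_forall_lt {D₁ D₂ : Finset α} {a : α} (h₁ : ∀ x ∈ D₁, a < x)
    (h₂ : ∀ x ∈ D₂, a < x) : Beats (insert a D₁) D₂ :=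
  ⟨a, Finset.mem_insert_self a D₁, fun h => lt_irrefl a (h₂ a h), fun x hx => by
    simp only [Finset.mem_insert, hx.ne, false_or]
    exact iff_of_false (fun h => (h₁ x h).not_gt hx) (fun h => (h₂ x h).not_gt hx)⟩

lemma beats_insert_insert_iff {D₁ D₂ : Finset α} {a : α} (h₁ : ∀ x ∈ D₁, a < x)
    (h₂ : ∀ x ∈ D₂, a < x) : Beats (insert a D₁) (insert a D₂) ↔ Beats D₁ D₂ := by
  have hlow : ∀ x ≤ a, x ∉ D₁ ∧ x ∉ D₂ := fun x hx =>
    ⟨fun h => (h₁ x h).not_ge hx, fun h => (h₂ x h).not_ge hx⟩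
  have hiff : ∀ x, (x ∈ insert a D₁ ↔ x ∈ insert a D₂) ↔ (x ∈ D₁ ↔ x ∈ D₂) := fun x => by
    rcases le_or_gt x a with hxa | hax
    · simp only [Finset.mem_insert, iff_of_false (hlow x hxa).1 (hlow x hxa).2]
    · simp [Finset.mem_insert, hax.ne']
  constructor
  · rintro ⟨m, hm₁, hm₂, hm⟩
    have hma : m ≠ a := fun h => hm₂ (h ▸ Finset.mem_insert_self a D₂)
    exact ⟨m, (Finset.mem_insert.mp hm₁).resolve_left hma,
      fun h => hm₂ (Finset.mem_insert_of_mem h), fun x hx => (hiff x).mp (hm x hx)⟩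
  · rintro ⟨m, hm₁, hm₂, hm⟩
    exact ⟨m, Finset.mem_insert_of_mem hm₁, by simp [(h₁ m hm₁).ne', hm₂],
      fun x hx => (hiff x).mpr (hm x hx)⟩

end Beats

section Gaps

variable {α : Type*} [AddCommGroup α] [LinearOrder α] [IsOrderedAddMonoid α]

def gaps (a : α) (l : List α) (c : α) : List α := List.zipWith (· - ·) (l ++ [c]) (a :: l)

lemma lex_gaps_iff_beats {c : α} {a : α} {l₁ l₂ : List α} (hl₁ : l₁.Pairwise (· < ·))
    (hl₂ : l₂.Pairwise (· < ·)) (hc₁ : ∀ x ∈ l₁, x < c) (hc₂ : ∀ x ∈ l₂, x < c) :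
    List.Lex (· < ·) (gaps a l₁ c) (gaps a l₂ c) ↔ Beats l₁.toFinset l₂.toFinset := by
  induction l₁ generalizing a l₂ with
  | nil =>
    cases l₂ with
    | nil => simpa [gaps] using not_beats_empty ∅
    | cons b t₂ =>
      have hbc := hc₂ b (by simp)
      simp only [gaps, List.nil_append, List.cons_append, List.zipWith_cons_cons,
        List.cons_lex_cons_iff, sub_lt_sub_iff_right, sub_left_inj, List.toFinset_nil]
      exact iff_of_false (by rintro (h | ⟨h, -⟩) <;> order) (not_beats_empty _)
  | cons a' t₁ ih =>
    rw [List.pairwise_cons] at hl₁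
    have hac := hc₁ a' (by simp)
    cases l₂ with
    | nil =>
      simp only [gaps, List.nil_append, List.cons_append, List.zipWith_cons_cons,
        List.cons_lex_cons_iff, sub_lt_sub_iff_right, hac, true_or, List.toFinset_cons,
        List.toFinset_nil, true_iff]
      exact beats_insert_of_forall_lt (by simpa using hl₁.1) (by simp)
    | cons b t₂ =>
      rw [List.pairwise_cons] at hl₂
      simp only [gaps, List.cons_append, List.zipWith_cons_cons, List.cons_lex_cons_iff,
        sub_lt_sub_iff_right, sub_left_inj, List.toFinset_cons]
      rcases lt_trichotomy a' b with hab | rfl | hba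
      · refine iff_of_true (.inl hab) (beats_insert_of_forall_lt (by simpa using hl₁.1) ?_)
        simpa [hab] using fun x hx => hab.trans (hl₂.1 x hx)
      · simp only [lt_irrefl, true_and, false_or]
        rw [beats_insert_insert_iff (by simpa using hl₁.1) (by simpa using hl₂.1)]
        exact ih hl₁.2 hl₂.2 (fun x hx => hc₁ x (by simp [hx])) (fun x hx => hc₂ x (by simp [hx]))
      · refine iff_of_false (by rintro (h | ⟨h, -⟩) <;> order) fun h => h.asymm ?_
        refine beats_insert_of_forall_lt (by simpa using hl₂.1) ?_
        simpa [hba] using fun x hx => hba.trans (hl₁.1 x hx)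

end Gaps

noncomputable def cwDists (C : Finset ℝ) (p : ℝ) : Finset ℝ := (C.erase p).image (cwAngle p)

lemma angleSeq_eq_gaps (C : Finset ℝ) (p : ℝ) :
    angleSeq C p = gaps 0 ((cwDists C p).sort (· ≤ ·)) (2 * π) := rfl

lemma listLexLt_angleSeq_iff (C : Finset ℝ) (p q : ℝ) :
    ListLexLt (angleSeq C p) (angleSeq C q) ↔ Beats (cwDists C p) (cwDists C q) := by
  have hlt : ∀ r, ∀ x ∈ (cwDists C r).sort (· ≤ ·), x < 2 * π := fun r x hx => by
    obtain ⟨y, -, rfl⟩ := Finset.mem_image.mp ((Finset.mem_sort _).mp hx)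
    exact (cwAngle_mem_Ico r y).2
  have hsorted : ∀ r, ((cwDists C r).sort (· ≤ ·)).Pairwise (· < ·) := fun r =>
    List.sortedLT_iff_pairwise.mp (Finset.sortedLT_sort _)
  rw [ListLexLt, angleSeq_eq_gaps, angleSeq_eq_gaps,
    lex_gaps_iff_beats (hsorted p) (hsorted q) (hlt p) (hlt q),
    Finset.sort_toFinset, Finset.sort_toFinset]

lemma isTrueLeader_iff {C : Finset ℝ} {r : ℝ} :
    IsTrueLeader C r ↔ r ∈ C ∧ ∀ x ∈ C, x ≠ r → Beats (cwDists C r) (cwDists C x) := by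
  simp only [IsTrueLeader, listLexLt_angleSeq_iff]

lemma OnCircle.subset {C C' : Finset ℝ} (hC : OnCircle C) (h : C' ⊆ C) : OnCircle C' :=
  fun x hx => hC x (h hx)

lemma mem_cwDists {C : Finset ℝ} (hC : OnCircle C) {p t : ℝ} (hp : p ∈ Ico 0 (2 * π)) :
    t ∈ cwDists C p ↔ t ∈ Ioo 0 (2 * π) ∧ cwPoint p t ∈ C := by
  simp only [cwDists, Finset.mem_image, Finset.mem_erase]
  constructor
  · rintro ⟨x, ⟨hxp, hx⟩, rfl⟩
    exact ⟨⟨cwAngle_pos hp (hC x hx) (Ne.symm hxp), (cwAngle_mem_Ico p x).2⟩,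
      by rwa [cwPoint_cwAngle p (hC x hx)]⟩
  · rintro ⟨ht, hC'⟩
    refine ⟨cwPoint p t, ⟨fun h => ?_, hC'⟩, cwAngle_cwPoint p (Ioo_subset_Ico_self ht)⟩
    have := cwAngle_cwPoint p (Ioo_subset_Ico_self ht)
    rw [h, cwAngle_self] at this
    exact ht.1.ne this

lemma cwAngle_mem_cwDists {C : Finset ℝ} {p x : ℝ} (hx : x ∈ C) (hxp : x ≠ p) :
    cwAngle p x ∈ cwDists C p :=
  Finset.mem_image_of_mem _ (Finset.mem_erase.mpr ⟨hxp, hx⟩)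

lemma cwDists_erase {C : Finset ℝ} (hC : OnCircle C) {p z : ℝ} (hp : p ∈ Ico 0 (2 * π))
    (hz : z ∈ Ico 0 (2 * π)) : cwDists (C.erase z) p = (cwDists C p).erase (cwAngle p z) := by
  ext t
  rw [Finset.mem_erase, mem_cwDists (hC.subset (Finset.erase_subset z C)) hp, mem_cwDists hC hp,
    Finset.mem_erase]
  constructor
  · rintro ⟨ht, hzt, htC⟩
    exact ⟨fun h => hzt (h ▸ cwPoint_cwAngle p hz), ht, htC⟩
  · rintro ⟨hzt, ht, htC⟩
    exact ⟨ht, fun h => hzt (h ▸ (cwAngle_cwPoint p (Ioo_subset_Ico_self ht)).symm), htC⟩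

lemma rotConf_eq_self_of_cwDists_eq {C : Finset ℝ} (hC : OnCircle C) {p q : ℝ} (hp : p ∈ C)
    (hq : q ∈ C) (h : cwDists C p = cwDists C q) : rotConf C (cwAngle q p) = C := by
  have hrot : ∀ x, norm2pi (x + cwAngle q p) = cwPoint p (cwAngle q x) := fun x => by
    rw [cwPoint, norm2pi_eq_norm2pi_iff]
    calc x + cwAngle q p ≡ x + (p - q) [PMOD 2 * π] := (cwAngle_modEq q p).add_left x
      _ = p + (x - q) := by ring
      _ ≡ p + cwAngle q x [PMOD 2 * π] := ((cwAngle_modEq q x).add_left p).symm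
  refine Finset.eq_of_subset_of_card_le (fun y hy => ?_) (Finset.card_image_of_injOn ?_).ge
  · obtain ⟨x, hx, rfl⟩ := Finset.mem_image.mp hy
    rw [hrot]
    rcases eq_or_ne x q with rfl | hxq
    · rwa [cwAngle_self, cwPoint, add_zero, norm2pi_eq_self (hC p hp)]
    · have := cwAngle_mem_cwDists hx hxq
      rw [← h, mem_cwDists hC (hC p hp)] at this
      exact this.2
  · intro x hx y hy hxy
    rw [norm2pi_eq_norm2pi_iff] at hxy
    exact eq_of_modEq_two_pi (hC x hx) (hC y hy) (hxy.add_right_cancel' _)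

lemma cwDists_ne_of_rotAsym {C : Finset ℝ} (hC : OnCircle C) (hA : RotAsym C) {p q : ℝ}
    (hp : p ∈ C) (hq : q ∈ C) (hpq : p ≠ q) : cwDists C p ≠ cwDists C q := fun h =>
  hA _ ⟨cwAngle_pos (hC q hq) (hC p hp) hpq.symm, (cwAngle_mem_Ico q p).2⟩
    (rotConf_eq_self_of_cwDists_eq hC hp hq h)

lemma exists_isTrueLeader {C : Finset ℝ} (hC : OnCircle C) (hA : RotAsym C) (hne : C.Nonempty) :
    ∃ L, IsTrueLeader C L := by
  obtain ⟨L, hL, hmin⟩ := C.exists_min_image (angleSeq C) hne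
  refine ⟨L, hL, fun x hx hxL => lt_of_le_of_ne (hmin x hx) fun heq => ?_⟩
  rcases beats_or_beats_of_ne (cwDists_ne_of_rotAsym hC hA hL hx hxL.symm) with h | h
  · exact lt_irrefl (angleSeq C x) (heq ▸ (listLexLt_angleSeq_iff C L x).mpr h)
  · exact lt_irrefl (angleSeq C x) (heq ▸ (listLexLt_angleSeq_iff C x L).mpr h)

lemma IsTrueLeader.eq {C : Finset ℝ} {L r : ℝ} (hL : IsTrueLeader C L) (hr : IsTrueLeader C r) :
    r = L := by
  by_contra hrL
  exact lt_asymm (α := List ℝ) (hL.2 r hr.1 hrL) (hr.2 L hL.1 (Ne.symm hrL))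

/-- Otherwise, with `c = cwAngle q r`, the point `x = cwPoint r c` beats `r` at `m - c`, since
`t ∈ cwDists C x ↔ c + t ∈ cwDists C r` and `t ∈ cwDists C r ↔ c + t ∈ cwDists C q`. -/
lemma IsTrueLeader.beatsAt_le_cwAngle {C : Finset ℝ} (hC : OnCircle C) {r q m : ℝ}
    (hr : IsTrueLeader C r) (hq : q ∈ C) (hqr : q ≠ r)
    (hm : BeatsAt (cwDists C r) (cwDists C q) m) : m ≤ cwAngle q r := by
  set c := cwAngle q r
  by_contra! hcm
  obtain ⟨hm₁, hm₂, hagree⟩ := hm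
  have hri := hC r hr.1
  have hqi := hC q hq
  have hc : c ∈ Ioo 0 (2 * π) := ⟨cwAngle_pos hqi hri hqr, (cwAngle_mem_Ico q r).2⟩
  have hm2π : m < 2 * π := ((mem_cwDists hC hri).mp hm₁).1.2
  set x := cwPoint r c
  have hxi : x ∈ Ico 0 (2 * π) := cwPoint_mem_Ico r c
  have hxC : x ∈ C :=
    ((mem_cwDists hC hri).mp ((hagree c hcm).mpr (cwAngle_mem_cwDists hr.1 hqr.symm))).2
  have hcx : cwAngle r x = c := cwAngle_cwPoint r (Ioo_subset_Ico_self hc)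
  have hxr : x ≠ r := fun h => hc.1.ne' (by rw [← hcx, h, cwAngle_self])
  have hq_shift : ∀ t, cwPoint q (c + t) = cwPoint r t := fun t => by
    rw [← cwPoint_cwPoint, cwPoint_cwAngle q hri]
  have hx_shift : ∀ t, cwPoint x t = cwPoint r (c + t) := fun t => cwPoint_cwPoint r c t
  suffices BeatsAt (cwDists C x) (cwDists C r) (m - c) from
    (isTrueLeader_iff.mp hr).2 x hxC hxr |>.asymm ⟨_, this⟩
  refine ⟨?_, ?_, fun t ht => ?_⟩
  · rw [mem_cwDists hC hxi, hx_shift, add_sub_cancel]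
    exact ⟨⟨by linarith, by linarith [hc.1]⟩, ((mem_cwDists hC hri).mp hm₁).2⟩
  · rw [mem_cwDists hC hri, ← hq_shift, add_sub_cancel]
    exact fun h => hm₂ ((mem_cwDists hC hqi).mpr ⟨⟨by linarith [hc.1], hm2π⟩, h.2⟩)
  · rcases le_or_gt t 0 with ht0 | ht0
    · simp [mem_cwDists hC hxi, mem_cwDists hC hri, ht0.not_gt]
    have hct : c + t ∈ Ioo 0 (2 * π) := ⟨by linarith [hc.1], by linarith⟩
    have ht' : t ∈ Ioo 0 (2 * π) := ⟨ht0, by linarith [hc.1]⟩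
    rw [mem_cwDists hC hxi, mem_cwDists hC hri, hx_shift, ← hq_shift t]
    simpa only [mem_cwDists hC hri, mem_cwDists hC hqi, hct, ht', true_and] using
      hagree (c + t) (by linarith)

lemma IsTrueLeader.erase_antip {C : Finset ℝ} (hC : OnCircle C) {r : ℝ}
    (hr : IsTrueLeader C r) : IsTrueLeader (C.erase (antip r)) r := by
  obtain ha | ha := em' (antip r ∈ C)
  · rwa [Finset.erase_eq_of_notMem ha]
  have hri := hC r hr.1
  refine isTrueLeader_iff.mpr ⟨Finset.mem_erase.mpr ⟨(antip_ne_self r).symm, hr.1⟩,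
    fun q hq' hqr => ?_⟩
  obtain ⟨hqa, hq⟩ := Finset.mem_erase.mp hq'
  have hqi := hC q hq
  obtain ⟨m, hm⟩ := (isTrueLeader_iff.mp hr).2 q hq hqr
  rw [cwDists_erase hC hri (antip_mem_Ico r), cwDists_erase hC hqi (antip_mem_Ico r),
    cwAngle_antip]
  refine hm.beats_erase_erase (cwAngle_mem_cwDists ha (Ne.symm hqa)) ?_
  have hc := cwAngle_mem_Ico q r
  have hcπ : cwAngle q r ≠ π := fun h =>
    hqa (by rw [(cwAngle_eq_pi_iff hri).mp h, antip_antip hqi])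
  rcases lt_or_gt_of_ne hcπ with hlt | hgt
  · exact (min_le_left _ _).trans_lt ((hr.beatsAt_le_cwAngle hC hq hqr hm).trans_lt hlt)
  · rw [cwAngle_antip_right, norm2pi_add_pi_of_le hgt.le hc.2]
    exact (min_le_right _ _).trans_lt (by linarith [hc.2])

namespace ConfusedLeader

variable {s : Finset ℝ} {L r : ℝ}

lemma isTrueLeader_confC0_and_not_confC1 (hs : OnCircle s) (h : ConfusedLeader s r) :
    IsTrueLeader (confC0 s r) r ∧ ¬ IsTrueLeader (confC1 s r) r := by
  have hC1 : OnCircle (confC1 s r) := fun x hx => by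
    rcases Finset.mem_insert.mp hx with rfl | hx
    exacts [antip_mem_Ico r, hs x hx]
  have h10 : IsTrueLeader (confC1 s r) r → IsTrueLeader (confC0 s r) r := fun h1 => by
    simpa [confC1, confC0, Finset.erase_insert_eq_erase] using h1.erase_antip hC1
  rcases h.2.2.2 with ⟨h0, h1⟩ | ⟨h1, h0⟩
  exacts [⟨h0, h1⟩, absurd (h10 h1) h0]

lemma antip_mem (hs : OnCircle s) (hL : IsTrueLeader s L) (h : ConfusedLeader s r)
    (hrL : r ≠ L) : antip r ∈ s := by
  by_contra ha
  have h0 := (h.isTrueLeader_confC0_and_not_confC1 hs).1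
  rw [confC0, Finset.erase_eq_of_notMem ha] at h0
  exact hrL (hL.eq h0)

lemma antip_notMem (hs : OnCircle s) (hL : IsTrueLeader s L) (h : ConfusedLeader s L) :
    antip L ∉ s := by
  intro ha
  have h1 := (h.isTrueLeader_confC0_and_not_confC1 hs).2
  rw [confC1, Finset.insert_eq_of_mem ha] at h1
  exact h1 hL

/-- If `cwAngle L r < π`, removing `antip r` costs `L` the angle `cwAngle L r + π`, which comes
after the angle `π` that `r` loses, so `L` still beats `r` in `C₀(r)`. -/
lemma pi_le_cwAngle (hs : OnCircle s) (hL : IsTrueLeader s L) (h : ConfusedLeader s r)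
    (hrL : r ≠ L) : π ≤ cwAngle L r := by
  by_contra! hlt
  have hri := hs r h.1
  have hLi := hs L hL.1
  have hpos := cwAngle_pos hLi hri hrL.symm
  have hLa : cwAngle L (antip r) = cwAngle L r + π := by
    rw [cwAngle_antip_right, norm2pi_add_pi_of_lt hpos.le hlt]
  have hLC0 : L ∈ confC0 s r := Finset.mem_erase.mpr
    ⟨fun h' => by rw [← h', cwAngle_self] at hLa; linarith, hL.1⟩
  obtain ⟨m, hm⟩ := (isTrueLeader_iff.mp hL).2 r h.1 hrL
  have hbeats : Beats (cwDists (confC0 s r) L) (cwDists (confC0 s r) r) := by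
    rw [confC0, cwDists_erase hs hLi (antip_mem_Ico r), cwDists_erase hs hri (antip_mem_Ico r),
      cwAngle_antip, hLa]
    refine hm.beats_erase_erase ?_ ((min_le_right _ _).trans_lt (by linarith))
    exact cwAngle_antip r ▸ cwAngle_mem_cwDists (h.antip_mem hs hL hrL) (antip_ne_self r)
  have hr0 := (h.isTrueLeader_confC0_and_not_confC1 hs).1
  exact hbeats.asymm ((isTrueLeader_iff.mp hr0).2 L hLC0 hrL.symm)

lemma cwAngle_antip_cwNeighbor (hs : OnCircle s) (hL : IsTrueLeader s L)
    (h : ConfusedLeader s r) (hrL : r ≠ L) {n : ℝ} (hn : IsCwNeighbor s r n) :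
    cwAngle (antip L) n = cwAngle L r - π + cwAngle r n := by
  have hπ := h.pi_le_cwAngle hs hL hrL
  have haL : cwAngle (antip L) r = cwAngle L r - π := by
    rw [cwAngle_antip_left, norm2pi_add_pi_of_le hπ (cwAngle_mem_Ico L r).2]
  have htot := cwAngle_add_cwAngle (hs L hL.1) (hs r h.1) hrL.symm
  have hnL := hn.2.2 L hL.1 hrL.symm
  rw [← haL]
  exact cwAngle_trans_of_lt (by linarith [pi_pos])

lemma cwAngle_antip_cwNeighbor_mem_Ioc (hs : OnCircle s) (hL : IsTrueLeader s L)
    (h : ConfusedLeader s r) (hrL : r ≠ L) {n : ℝ} (hn : IsCwNeighbor s r n) :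
    cwAngle (antip L) n ∈ Ioc 0 π := by
  have hπ := h.pi_le_cwAngle hs hL hrL
  have hrn := cwAngle_pos (hs r h.1) (hs n hn.1) hn.2.1.symm
  have htot := cwAngle_add_cwAngle (hs L hL.1) (hs r h.1) hrL.symm
  have hnL := hn.2.2 L hL.1 hrL.symm
  rw [h.cwAngle_antip_cwNeighbor hs hL hrL hn]
  constructor <;> linarith

end ConfusedLeader

lemma IsTrueLeader.cwAngle_cwNeighbor_le {s : Finset ℝ} {L q nL n : ℝ}
    (hL : IsTrueLeader s L) (hq : q ∈ s) (hqL : q ≠ L) (hnL : IsCwNeighbor s L nL)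
    (hn : IsCwNeighbor s q n) : cwAngle L nL ≤ cwAngle q n := by
  obtain ⟨m, hm⟩ := (isTrueLeader_iff.mp hL).2 q hq hqL
  obtain ⟨y, hy, hyn⟩ := hm.exists_le (cwAngle_mem_cwDists hn.1 hn.2.1)
  obtain ⟨x, hx, rfl⟩ := Finset.mem_image.mp hy
  exact (hnL.2.2 x (Finset.mem_of_mem_erase hx) (Finset.ne_of_mem_erase hx)).trans hyn

lemma ne_antip_of_cwAngle_mem_Ioc {a x y : ℝ} (hx : cwAngle a x ∈ Ioc 0 π)
    (hy : cwAngle a y ∈ Ioc 0 π) : y ≠ antip x := by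
  rintro rfl
  rw [cwAngle_antip_right] at hy
  rcases hx.2.lt_or_eq with hlt | heq
  · rw [norm2pi_add_pi_of_lt hx.1.le hlt] at hy
    linarith [hy.2, hx.1]
  · rw [heq, ← two_mul, norm2pi_two_pi] at hy
    exact lt_irrefl 0 hy.1

/-- The first gap at a confused true leader `L` would be the angle from `antip L` to the
neighbor of `r`, which exceeds the first gap at `r`. -/
lemma ConfusedLeader.antip_cwNeighbor_ne {s : Finset ℝ} (hs : OnCircle s) {L r n nL : ℝ}
    (hL : IsTrueLeader s L) (hLc : ConfusedLeader s L) (h : ConfusedLeader s r) (hrL : r ≠ L)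
    (hn : IsCwNeighbor s r n) (hnL : IsCwNeighbor s L nL) : antip n ≠ nL := by
  rintro rfl
  have hπ : π < cwAngle L r := (h.pi_le_cwAngle hs hL hrL).lt_of_ne fun h' =>
    hLc.antip_notMem hs hL ((cwAngle_eq_pi_iff (hs r h.1)).mp h'.symm ▸ h.1)
  have hgap := hL.cwAngle_cwNeighbor_le h.1 hrL hnL hn
  rw [cwAngle_antip_right, ← cwAngle_antip_left,
    h.cwAngle_antip_cwNeighbor hs hL hrL hn] at hgap
  linarith

/-- the first clockwise neighbors of two distinct confused leaders are
not antipodal to each other. -/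
theorem confused_leaders_neighbors_not_antipodal
    (s : Finset ℝ) (hcirc : OnCircle s) (hasym : RotAsym s)
    (r₁ r₂ : ℝ) (h₁ : ConfusedLeader s r₁) (h₂ : ConfusedLeader s r₂)
    (hne : r₁ ≠ r₂)
    (n₁ n₂ : ℝ) (hn₁ : IsCwNeighbor s r₁ n₁) (hn₂ : IsCwNeighbor s r₂ n₂) :
    antip n₁ ≠ n₂ := by
  obtain ⟨L, hL⟩ := exists_isTrueLeader hcirc hasym ⟨r₁, h₁.1⟩
  by_cases h₁L : r₁ = L
  · subst h₁L
    intro heq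
    refine h₁.antip_cwNeighbor_ne hcirc hL h₂ hne.symm hn₂ hn₁ ?_
    rw [← heq, antip_antip (hcirc n₁ hn₁.1)]
  by_cases h₂L : r₂ = L
  · subst h₂L
    exact h₂.antip_cwNeighbor_ne hcirc hL h₁ hne hn₁ hn₂
  exact (ne_antip_of_cwAngle_mem_Ioc (h₁.cwAngle_antip_cwNeighbor_mem_Ioc hcirc hL h₁L hn₁)
    (h₂.cwAngle_antip_cwNeighbor_mem_Ioc hcirc hL h₂L hn₂)).symm
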